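/- arXiv:1206.1170 — 11 statements merged into one kernel-verified Lean document; each statement's English description precedes it below -/
import Mathlib

section
/- Let ι be a (finite) index type, E a real normed vector space, f : ι → E → (ι → E) → E, and τ : ι → ι → ℝ a family of delays. Suppose x : ι → ℝ → E is such that for every j ∈ ι, x j is differentiable on ℝ and satisfies deriv (x j) t = f j (x j t) (fun k => x k (t - τ j k)) for all t ∈ ℝ. Then for any time-shift vector η : ι → ℝ, the functions y j t := x j (t + η j) are differentiable on ℝ and satisfy the transformed delay equation deriv (y j) t = f j (y j t) (fun k => y k (t - (τ j k + η k - η j))) for all t ∈ ℝ. -/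
/-- **Time-shift transformation of a network delay differential equation.**
If `x` solves `ẋ_j(t) = f_j(x_j(t), (x_k(t − τ_{jk}))_k)`, then for any shifts `η`,
the shifted functions `y_j(t) = x_j(t + η_j)` are differentiable and solve the
transformed system with delays `τ̃_{jk} = τ_{jk} + η_k − η_j`. -/
theorem timeshift_transforms_solution
    {ι : Type*} [Fintype ι] {E : Type*} [NormedAddCommGroup E] [NormedSpace ℝ E]
    (f : ι → E → (ι → E) → E) (τ : ι → ι → ℝ) (x : ι → ℝ → E)
    (hdiff : ∀ j, Differentiable ℝ (x j))
    (hsol : ∀ j, ∀ t : ℝ, deriv (x j) t = f j (x j t) (fun k => x k (t - τ j k)))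
    (η : ι → ℝ) (y : ι → ℝ → E) (hy : ∀ j, ∀ t : ℝ, y j t = x j (t + η j)) :
    (∀ j, Differentiable ℝ (y j)) ∧
      (∀ j, ∀ t : ℝ, deriv (y j) t =
        f j (y j t) (fun k => y k (t - (τ j k + η k - η j)))) := by
  have hyfun : ∀ j, y j = fun t => x j (t + η j) := fun j => funext (hy j)
  constructor
  · intro j
    rw [hyfun j]
    exact (hdiff j).comp (differentiable_id.add_const _)
  · intro j t
    rw [hyfun j]
    rw [deriv_comp_add_const (x j) (η j) t, hsol j (t + η j)]
    simp only [hy]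
    congr 1
    funext k
    congr 1
    ring
end

section
/- Let ι be an index type, E a real normed vector space, f : ι → E → (ι → E) → E, τ : ι → ι → ℝ, and η : ι → ℝ. Let x : ι → ℝ → E and define y : ι → ℝ → E by y j t = x j (t + η j). Then x satisfies (for all j and all t ∈ ℝ) the equation deriv (x j) t = f j (x j t) (fun k => x k (t - τ j k)) with each x j differentiable, if and only if y satisfies deriv (y j) t = f j (y j t) (fun k => y k (t - (τ j k + η k - η j))) with each y j differentiable. In other words, the time-shift transformation is a bijection between the solution set of the original system and the solution set of the transformed system, with inverse given by the shifts −η. -/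
/-- **The time-shift transformation is a bijection between solution sets.**
`x` solves the original network delay system if and only if the shifted family
`y_j(t) = x_j(t + η_j)` solves the transformed system with delays
`τ̃_{jk} = τ_{jk} + η_k − η_j`. -/
theorem timeshift_solution_iff
    {ι : Type*} {E : Type*} [NormedAddCommGroup E] [NormedSpace ℝ E]
    (f : ι → E → (ι → E) → E) (τ : ι → ι → ℝ) (η : ι → ℝ)
    (x : ι → ℝ → E) (y : ι → ℝ → E) (hy : ∀ j, ∀ t : ℝ, y j t = x j (t + η j)) :
    ((∀ j, Differentiable ℝ (x j)) ∧
        ∀ j, ∀ t : ℝ, deriv (x j) t = f j (x j t) (fun k => x k (t - τ j k))) ↔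
      ((∀ j, Differentiable ℝ (y j)) ∧
        ∀ j, ∀ t : ℝ, deriv (y j) t =
          f j (y j t) (fun k => y k (t - (τ j k + η k - η j)))) := by
  have hyx : ∀ j, y j = fun t => x j (t + η j) := fun j => funext (hy j)
  have hxy : ∀ j, x j = fun t => y j (t + (-η j)) := by
    intro j; funext t; rw [hy j]; ring_nf
  constructor
  · rintro ⟨hd, heq⟩
    constructor
    · intro j
      rw [hyx j]
      exact (hd j).comp (differentiable_id.add_const _)
    · intro j t
      rw [hyx j]
      rw [deriv_comp_add_const]
      rw [heq j (t + η j)]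
      congr 1
      funext k
      rw [hy k]
      ring_nf
  · rintro ⟨hd, heq⟩
    constructor
    · intro j
      rw [hxy j]
      exact (hd j).comp (differentiable_id.add_const _)
    · intro j t
      rw [hxy j]
      rw [deriv_comp_add_const]
      rw [heq j (t + (-η j))]
      congr 1
      funext k
      rw [hy k]
      ring_nf
end

section
/- Let ι be an index type, E a real normed vector space, f : ι → E → (ι → E) → E, τ : ι → ι → ℝ, and η : ι → ℝ. Suppose x : ι → ℝ → E is a solution of the network delay system (each x j differentiable with deriv (x j) t = f j (x j t) (fun k => x k (t - τ j k)) for all t), and suppose x is periodic with period P > 0, i.e. x j (t + P) = x j t for all j and t. Then the transformed functions y j t := x j (t + η j) form a solution of the transformed system with delays τ̃_{jk} = τ_{jk} + η_k − η_j that is also periodic with the same period P. -/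
/-- **Periodic solutions are mapped to periodic solutions with the same period.**
If `x` is a `P`-periodic solution of the network delay system, then the shifted
family `y_j(t) = x_j(t + η_j)` is a `P`-periodic solution of the transformed
system with delays `τ̃_{jk} = τ_{jk} + η_k − η_j`. -/
theorem timeshift_preserves_periodic_solution
    {ι : Type*} {E : Type*} [NormedAddCommGroup E] [NormedSpace ℝ E]
    (f : ι → E → (ι → E) → E) (τ : ι → ι → ℝ) (η : ι → ℝ)
    (x : ι → ℝ → E)
    (hdiff : ∀ j, Differentiable ℝ (x j))
    (hsol : ∀ j, ∀ t : ℝ, deriv (x j) t = f j (x j t) (fun k => x k (t - τ j k)))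
    (P : ℝ) (hP : 0 < P) (hper : ∀ j, ∀ t : ℝ, x j (t + P) = x j t)
    (y : ι → ℝ → E) (hy : ∀ j, ∀ t : ℝ, y j t = x j (t + η j)) :
    (∀ j, Differentiable ℝ (y j)) ∧
      (∀ j, ∀ t : ℝ, deriv (y j) t =
        f j (y j t) (fun k => y k (t - (τ j k + η k - η j)))) ∧
      (∀ j, ∀ t : ℝ, y j (t + P) = y j t) := by
  have hyfun : ∀ j, y j = fun t => x j (t + η j) := fun j => funext (hy j)
  refine ⟨?_, ?_, ?_⟩
  · intro j
    rw [hyfun j]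
    exact (hdiff j).comp (differentiable_id.add_const (η j))
  · intro j t
    rw [hyfun j]
    rw [deriv_comp_add_const, hsol j (t + η j)]
    congr 1
    funext k
    rw [hy k]
    congr 1
    ring
  · intro j t
    rw [hy, hy]
    have : t + P + η j = t + η j + P := by ring
    rw [this, hper]
end

section
/- Let N ≥ 1 and let τ : Fin N → ℝ be delays on the links of a unidirectional ring (the link of index j goes from node j+1 to node j, indices modulo N). Then there exist time shifts η : Fin N → ℝ such that all transformed delays are equal to the average delay: τ j + η (j+1) − η j = (∑_{k} τ k) / N for every j ∈ Fin N. -/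
/-!
The condition is `η (j + 1) - η j = mean - τ j` for every link, so `η` can be taken to be the
partial sums of the deviations `mean - τ j`. Going once around the ring these partial sums add up
to `∑ (mean - τ j) = 0`, so they close up consistently at the wrap-around link `N - 1 → 0`.
-/

namespace Fin

@[to_additive]
theorem partialProd_last {M : Type*} [CommMonoid M] {n : ℕ} (f : Fin n → M) :
    partialProd f (last n) = ∏ i, f i := by
  rw [partialProd, val_last, List.take_of_length_le List.length_ofFn.le, List.prod_ofFn]

theorem exists_add_one_sub_eq_of_sum_eq_zero {G : Type*} [AddCommGroup G] {n : ℕ}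
    (f : Fin (n + 1) → G) (hf : ∑ i, f i = 0) :
    ∃ η : Fin (n + 1) → G, ∀ j, η (j + 1) - η j = f j := by
  refine ⟨fun j => partialSum f j.castSucc, fun j => ?_⟩
  induction j using lastCases with
  | last =>
    have h := partialSum_succ f (last n)
    rw [succ_last, partialSum_last, hf, eq_comm] at h
    simp only [last_add_one, castSucc_zero, partialSum_zero, zero_sub, neg_eq_iff_add_eq_zero]
    exact h
  | cast i =>
    simp only [coeSucc_eq_succ, ← succ_castSucc, partialSum_succ, add_sub_cancel_left]

end Fin

/-- **Homogenization of delays in a unidirectional ring.**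
For any delays `τ` on the links of a unidirectional ring of `N ≥ 1` nodes, there
exist time shifts `η` such that every transformed delay
`τ̃_j = τ_j + η_{j+1} − η_j` equals the average delay `(∑ τ_k) / N`. -/
theorem ring_delays_homogenizable (N : ℕ) [NeZero N] (τ : Fin N → ℝ) :
    ∃ η : Fin N → ℝ, ∀ j : Fin N,
      τ j + η (j + 1) - η j = (∑ k : Fin N, τ k) / N := by
  obtain ⟨n, rfl⟩ := Nat.exists_eq_add_one_of_ne_zero (NeZero.ne N)
  have deviations_sum_zero : ∑ k, ((∑ k, τ k) / (n + 1 : ℕ) - τ k) = 0 := by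
    rw [Finset.sum_sub_distrib, Finset.sum_const, Finset.card_univ, Fintype.card_fin,
      nsmul_eq_mul]
    field_simp
    ring
  obtain ⟨η, hη⟩ := Fin.exists_add_one_sub_eq_of_sum_eq_zero _ deviations_sum_zero
  exact ⟨η, fun j => by linarith [hη j]⟩
end

section
/- Consider motif II: three nodes with links 1→2 (delay τ₁), 1→3 (delay τ₂) and 2→3 (delay τ₃); under time shifts η₁, η₂, η₃ the transformed delays are τ̃₁ = τ₁ + η₁ − η₂, τ̃₂ = τ₂ + η₁ − η₃, τ̃₃ = τ₃ + η₂ − η₃. Then there exist η₁, η₂, η₃ ∈ ℝ such that all three transformed delays are nonnegative, at least two of them are zero, and the remaining one equals the generalized round-trip time: τ̃₁ + τ̃₂ + τ̃₃ = |τ₁ − τ₂ + τ₃|. Thus motif II always admits a reduction to a single nonnegative delay equal to T = |τ₁ − τ₂ + τ₃|, and if τ₁ − τ₂ + τ₃ = 0 all delays can be eliminated. -/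
/-- **Motif II, reduction to a single nonnegative delay.** For the motif with
links `1→2` (delay `τ₁`), `1→3` (delay `τ₂`), `2→3` (delay `τ₃`), there exist
time shifts such that all transformed delays are nonnegative, at least two of
them vanish, and their sum equals the generalized round-trip time
`T = |τ₁ − τ₂ + τ₃|`. -/
theorem motifII_single_delay_reduction (τ₁ τ₂ τ₃ : ℝ) :
    ∃ η₁ η₂ η₃ : ℝ,
      0 ≤ τ₁ + η₁ - η₂ ∧ 0 ≤ τ₂ + η₁ - η₃ ∧ 0 ≤ τ₃ + η₂ - η₃ ∧
      ((τ₁ + η₁ - η₂ = 0 ∧ τ₂ + η₁ - η₃ = 0) ∨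
        (τ₁ + η₁ - η₂ = 0 ∧ τ₃ + η₂ - η₃ = 0) ∨
        (τ₂ + η₁ - η₃ = 0 ∧ τ₃ + η₂ - η₃ = 0)) ∧
      (τ₁ + η₁ - η₂) + (τ₂ + η₁ - η₃) + (τ₃ + η₂ - η₃) = |τ₁ - τ₂ + τ₃| := by
  rcases le_total 0 (τ₁ - τ₂ + τ₃) with h | h
  · exact ⟨0, τ₁, τ₂, by linarith, by linarith, by linarith,
      Or.inl ⟨by ring, by ring⟩, by rw [abs_of_nonneg h]; ring⟩
  · exact ⟨0, τ₁, τ₁ + τ₃, by linarith, by linarith, by linarith,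
      Or.inr (Or.inl ⟨by ring, by ring⟩), by rw [abs_of_nonpos h]; ring⟩
end

section
/- Consider motif III: four nodes with links 1→2 (delay τ₁), 3→2 (delay τ₂), 4→3 (delay τ₃) and 4→1 (delay τ₄); under time shifts η₁, η₂, η₃, η₄ the transformed delays are τ̃₁ = τ₁ + η₁ − η₂, τ̃₂ = τ₂ + η₃ − η₂, τ̃₃ = τ₃ + η₄ − η₃, τ̃₄ = τ₄ + η₄ − η₁. Then there exist η₁, η₂, η₃, η₄ ∈ ℝ such that all four transformed delays are nonnegative, at least three of them are zero, and the remaining one equals the generalized round-trip time: τ̃₁ + τ̃₂ + τ̃₃ + τ̃₄ = |τ₁ − τ₂ − τ₃ + τ₄|. Thus motif III always admits a reduction to a single nonnegative delay, and if τ₁ − τ₂ − τ₃ + τ₄ = 0 all delays can be eliminated. -/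
/-- **Motif III, reduction to a single nonnegative delay.** For the motif with
links `1→2` (delay `τ₁`), `3→2` (delay `τ₂`), `4→3` (delay `τ₃`), `4→1` (delay
`τ₄`), there exist time shifts such that all four transformed delays are
nonnegative, at least three of them vanish, and their sum equals the
generalized round-trip time `T = |τ₁ − τ₂ − τ₃ + τ₄|`. -/
theorem motifIII_single_delay_reduction (τ₁ τ₂ τ₃ τ₄ : ℝ) :
    ∃ η₁ η₂ η₃ η₄ : ℝ,
      0 ≤ τ₁ + η₁ - η₂ ∧ 0 ≤ τ₂ + η₃ - η₂ ∧ 0 ≤ τ₃ + η₄ - η₃ ∧ 0 ≤ τ₄ + η₄ - η₁ ∧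
      ((τ₁ + η₁ - η₂ = 0 ∧ τ₂ + η₃ - η₂ = 0 ∧ τ₃ + η₄ - η₃ = 0) ∨
        (τ₁ + η₁ - η₂ = 0 ∧ τ₂ + η₃ - η₂ = 0 ∧ τ₄ + η₄ - η₁ = 0) ∨
        (τ₁ + η₁ - η₂ = 0 ∧ τ₃ + η₄ - η₃ = 0 ∧ τ₄ + η₄ - η₁ = 0) ∨
        (τ₂ + η₃ - η₂ = 0 ∧ τ₃ + η₄ - η₃ = 0 ∧ τ₄ + η₄ - η₁ = 0)) ∧
      (τ₁ + η₁ - η₂) + (τ₂ + η₃ - η₂) + (τ₃ + η₄ - η₃) + (τ₄ + η₄ - η₁)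
        = |τ₁ - τ₂ - τ₃ + τ₄| := by
  rcases le_total 0 (τ₁ - τ₂ - τ₃ + τ₄) with h | h
  · refine ⟨τ₄, τ₂ + τ₃, τ₃, 0, by linarith, by linarith, by linarith,
      by linarith, Or.inr (Or.inr (Or.inr ⟨by ring, by ring, by ring⟩)), ?_⟩
    rw [abs_of_nonneg h]; ring
  · refine ⟨τ₄, τ₁ + τ₄, τ₃, 0, by linarith, by linarith, by linarith,
      by linarith, Or.inr (Or.inr (Or.inl ⟨by ring, by ring, by ring⟩)), ?_⟩
    rw [abs_of_nonpos h]; ring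
end

section
/- Let a directed network be given by a finite nonempty vertex set V, a finite link index set Λ with source and target maps s, t : Λ → V, and nonnegative delays τ : Λ → ℝ, τ(ℓ) ≥ 0 for all ℓ. Assume the underlying undirected graph is connected, i.e. any two vertices are joined by a finite path of links each traversed in either direction. Then there exists a time-shift vector η : V → ℝ such that the transformed delays τ̃(ℓ) = τ(ℓ) + η(s(ℓ)) − η(t(ℓ)) satisfy: (a) τ̃(ℓ) ≥ 0 for every link ℓ, and (b) the set of links with τ̃(ℓ) = 0 spans the network, i.e. any two vertices of V are joined by a finite path consisting only of links with τ̃(ℓ) = 0, each traversed in either direction (equivalently, the zero-delay links contain a spanning tree of the underlying graph). -/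
/-!
Grow the set `S` of vertices reachable from a base vertex through zero-delay links. Shifting every
vertex of `S` by the same constant `c` leaves the delays of links inside or outside `S` unchanged
and moves the delay of a link crossing `S` by `±c`. Taking `|c|` to be the least delay of a
crossing link, with the sign that annihilates it, keeps all delays nonnegative, keeps the old
zero-delay links (none of them crosses `S`), and adds a new vertex to `S`. After finitely many
shifts `S` is everything, and the shifts add up.
-/

/-- `linkRel s t P a b` holds if some link `ℓ` satisfying the predicate `P`
joins the vertices `a` and `b` (traversed in either direction). -/
def linkRel {V Λ : Type*} (s t : Λ → V) (P : Λ → Prop) (a b : V) : Prop :=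
  ∃ ℓ : Λ, P ℓ ∧ ((s ℓ = a ∧ t ℓ = b) ∨ (s ℓ = b ∧ t ℓ = a))

open Relation

section

variable {V Λ : Type*} (s t : Λ → V)

instance linkRel.instSymm (P : Λ → Prop) : Std.Symm (linkRel s t P) where
  symm _ _ := fun ⟨ℓ, hℓ, h⟩ => ⟨ℓ, hℓ, h.symm⟩

def linkComponent (P : Λ → Prop) (v₀ : V) : Set V :=
  {v | ReflTransGen (linkRel s t P) v₀ v}

variable {s t}

theorem mem_linkComponent_iff_of_link {P : Λ → Prop} {v₀ : V} {ℓ : Λ} (hℓ : P ℓ) :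
    s ℓ ∈ linkComponent s t P v₀ ↔ t ℓ ∈ linkComponent s t P v₀ :=
  ⟨fun h => h.tail ⟨ℓ, hℓ, .inl ⟨rfl, rfl⟩⟩, fun h => h.tail ⟨ℓ, hℓ, .inr ⟨rfl, rfl⟩⟩⟩

theorem linkComponent_mono {P Q : Λ → Prop} (h : ∀ ℓ, P ℓ → Q ℓ) (v₀ : V) :
    linkComponent s t P v₀ ⊆ linkComponent s t Q v₀ :=
  fun _ =>
    ReflTransGen.mono (fun _ _ (hab : linkRel s t P _ _) =>
      let ⟨ℓ, hℓ, hst⟩ := hab; ⟨ℓ, h ℓ hℓ, hst⟩) _ _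

theorem exists_link_crossing_of_reflTransGen {P : Λ → Prop} {S : Set V} {a b : V}
    (h : ReflTransGen (linkRel s t P) a b) (ha : a ∈ S) (hb : b ∉ S) :
    ∃ ℓ, P ℓ ∧ ¬(s ℓ ∈ S ↔ t ℓ ∈ S) := by
  induction h with
  | refl => exact absurd ha hb
  | @tail c b _ hcb ih =>
    by_cases hc : c ∈ S
    · obtain ⟨ℓ, hℓ, ⟨rfl, rfl⟩ | ⟨rfl, rfl⟩⟩ := hcb
      · exact ⟨ℓ, hℓ, by simp [hc, hb]⟩
      · exact ⟨ℓ, hℓ, by simp [hc, hb]⟩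
    · exact ih hc

variable (s t)

def timeShift (τ : Λ → ℝ) (η : V → ℝ) (ℓ : Λ) : ℝ :=
  τ ℓ + η (s ℓ) - η (t ℓ)

@[simp]
theorem timeShift_zero (τ : Λ → ℝ) : timeShift s t τ 0 = τ := by
  ext ℓ
  simp [timeShift]

theorem timeShift_timeShift (τ : Λ → ℝ) (η η' : V → ℝ) :
    timeShift s t (timeShift s t τ η) η' = timeShift s t τ (η + η') := by
  ext ℓ
  simp only [timeShift, Pi.add_apply]
  ring

variable {s t}

theorem timeShift_indicator_of_iff (τ : Λ → ℝ) {S : Set V} (c : ℝ) {ℓ : Λ}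
    (h : s ℓ ∈ S ↔ t ℓ ∈ S) : timeShift s t τ (S.indicator fun _ => c) ℓ = τ ℓ := by
  by_cases hs : s ℓ ∈ S <;> simp [timeShift, hs, ← h]

theorem sub_abs_le_timeShift_indicator (τ : Λ → ℝ) (S : Set V) (c : ℝ) (ℓ : Λ) :
    τ ℓ - |c| ≤ timeShift s t τ (S.indicator fun _ => c) ℓ := by
  have := neg_abs_le c
  have := le_abs_self c
  by_cases hs : s ℓ ∈ S <;> by_cases ht : t ℓ ∈ S <;>
    simp only [timeShift, Set.indicator, hs, ht, if_true, if_false] <;> linarith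

theorem exists_timeShift_nonneg_linkComponent_ssubset [Finite Λ] {τ : Λ → ℝ} (hτ : 0 ≤ τ)
    {v₀ b : V} (hb : ReflTransGen (linkRel s t fun _ => True) v₀ b)
    (hbS : b ∉ linkComponent s t (τ · = 0) v₀) :
    ∃ η, 0 ≤ timeShift s t τ η ∧
      linkComponent s t (τ · = 0) v₀ ⊂ linkComponent s t (timeShift s t τ η · = 0) v₀ := by
  classical
  set S := linkComponent s t (τ · = 0) v₀
  obtain ⟨ℓ₀, hℓ₀, hmin⟩ : ∃ ℓ₀, ¬(s ℓ₀ ∈ S ↔ t ℓ₀ ∈ S) ∧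
      ∀ ℓ, ¬(s ℓ ∈ S ↔ t ℓ ∈ S) → τ ℓ₀ ≤ τ ℓ := by
    obtain ⟨ℓ, -, hℓ⟩ := exists_link_crossing_of_reflTransGen hb .refl hbS
    exact Set.exists_min_image _ τ (Set.toFinite _) ⟨ℓ, hℓ⟩
  set c := if s ℓ₀ ∈ S then -τ ℓ₀ else τ ℓ₀
  set η := S.indicator fun _ => c
  have hc : |c| = τ ℓ₀ := by
    by_cases hs : s ℓ₀ ∈ S <;> simp [c, hs, abs_of_nonneg (hτ ℓ₀)]
  have hnonneg (ℓ : Λ) : 0 ≤ timeShift s t τ η ℓ := by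
    by_cases hℓ : s ℓ ∈ S ↔ t ℓ ∈ S
    · rw [timeShift_indicator_of_iff τ c hℓ]
      exact hτ ℓ
    · linarith [sub_abs_le_timeShift_indicator (s := s) (t := t) τ S c ℓ, hmin ℓ hℓ]
  have hzero : timeShift s t τ η ℓ₀ = 0 := by
    by_cases hs : s ℓ₀ ∈ S
    · have ht : t ℓ₀ ∉ S := fun ht => hℓ₀ (iff_of_true hs ht)
      simp [η, c, timeShift, hs, ht]
    · have ht : t ℓ₀ ∈ S := (not_iff.1 hℓ₀).1 hs
      simp [η, c, timeShift, hs, ht]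
  set S' := linkComponent s t (timeShift s t τ η · = 0) v₀
  have hsub : S ⊆ S' :=
    linkComponent_mono (fun ℓ hℓ => by
      rw [timeShift_indicator_of_iff τ c (mem_linkComponent_iff_of_link hℓ), hℓ]) v₀
  have hℓ₀' : s ℓ₀ ∈ S' ↔ t ℓ₀ ∈ S' := mem_linkComponent_iff_of_link hzero
  refine ⟨η, hnonneg, (Set.ssubset_iff_of_subset hsub).2 ?_⟩
  by_cases hs : s ℓ₀ ∈ S
  · exact ⟨t ℓ₀, hℓ₀'.1 (hsub hs), fun ht => hℓ₀ (iff_of_true hs ht)⟩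
  · exact ⟨s ℓ₀, hℓ₀'.2 (hsub ((not_iff.1 hℓ₀).1 hs)), hs⟩

theorem exists_timeShift_nonneg_linkComponent_eq_univ [Finite V] [Finite Λ] {v₀ : V}
    (hconn : ∀ b, ReflTransGen (linkRel s t fun _ => True) v₀ b) {τ : Λ → ℝ} (hτ : 0 ≤ τ) :
    ∃ η, 0 ≤ timeShift s t τ η ∧ linkComponent s t (timeShift s t τ η · = 0) v₀ = Set.univ := by
  induction hn : (linkComponent s t (τ · = 0) v₀)ᶜ.ncard using Nat.strong_induction_on
    generalizing τ with
  | _ n ih =>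
  by_cases huniv : linkComponent s t (τ · = 0) v₀ = Set.univ
  · exact ⟨0, by simpa using hτ, by simpa using huniv⟩
  obtain ⟨b, hb⟩ := (Set.ne_univ_iff_exists_notMem _).1 huniv
  obtain ⟨η, hη, hlt⟩ := exists_timeShift_nonneg_linkComponent_ssubset hτ (hconn b) hb
  obtain ⟨η', hη', huniv'⟩ :=
    ih _ (hn ▸ Set.ncard_lt_ncard (compl_lt_compl_iff_lt.2 hlt)) hη rfl
  exact ⟨η + η', by rwa [← timeShift_timeShift], by rwa [← timeShift_timeShift]⟩

end

/-- **Existence of a nonnegative reduction with a spanning set of instantaneous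
links.** In a finite connected network with nonnegative delays, there is a
time-shift vector `η` such that all transformed delays
`τ̃(ℓ) = τ(ℓ) + η(s(ℓ)) − η(t(ℓ))` are nonnegative and the links with
`τ̃(ℓ) = 0` span the network (any two vertices are joined by an undirected path
of instantaneous links). -/
theorem exists_timeshift_nonneg_spanning_zero_links
    {V Λ : Type*} [Fintype V] [Nonempty V] [Fintype Λ]
    (s t : Λ → V) (τ : Λ → ℝ) (hτ : ∀ ℓ, 0 ≤ τ ℓ)
    (hconn : ∀ a b : V, Relation.ReflTransGen (linkRel s t (fun _ => True)) a b) :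
    ∃ η : V → ℝ,
      (∀ ℓ, 0 ≤ τ ℓ + η (s ℓ) - η (t ℓ)) ∧
      (∀ a b : V, Relation.ReflTransGen
        (linkRel s t (fun ℓ => τ ℓ + η (s ℓ) - η (t ℓ) = 0)) a b) := by
  obtain ⟨v₀⟩ := ‹Nonempty V›
  obtain ⟨η, hη, huniv⟩ := exists_timeShift_nonneg_linkComponent_eq_univ (hconn v₀) hτ
  have hreach (v : V) : ReflTransGen (linkRel s t (timeShift s t τ η · = 0)) v₀ v :=
    Set.eq_univ_iff_forall.1 huniv v
  exact ⟨η, hη, fun a b => (Std.Symm.symm _ _ (hreach a)).trans (hreach b)⟩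
end

section
/- Let a directed network be given by a finite nonempty vertex set V with |V| = N, a finite link index set Λ with |Λ| = L, source and target maps s, t : Λ → V, and nonnegative delays τ : Λ → ℝ. Assume the underlying undirected graph is connected. Then there exists a time-shift vector η : V → ℝ such that the transformed delays τ̃(ℓ) = τ(ℓ) + η(s(ℓ)) − η(t(ℓ)) are all nonnegative and the number of links carrying a nonzero transformed delay is at most the cycle space dimension C = L − (N − 1): |{ℓ ∈ Λ : τ̃(ℓ) ≠ 0}| ≤ L − (N − 1). -/
lemma linkRel_symm {V Λ : Type*} (s t : Λ → V) (P : Λ → Prop) :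
    Symmetric (linkRel s t P) := by
  rintro a b ⟨ℓ, hP, h | h⟩
  · exact ⟨ℓ, hP, Or.inr ⟨h.1, h.2⟩⟩
  · exact ⟨ℓ, hP, Or.inl ⟨h.1, h.2⟩⟩

/-- chains of a fixed length for a relation -/
def stepsRel {V : Type*} (R : V → V → Prop) : ℕ → V → V → Prop
  | 0, a, b => a = b
  | n + 1, a, b => ∃ c, R a c ∧ stepsRel R n c b

lemma exists_steps_of_reflTransGen {V : Type*} {R : V → V → Prop} {a b : V}
    (h : Relation.ReflTransGen R a b) : ∃ n, stepsRel R n a b := by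
  induction h using Relation.ReflTransGen.head_induction_on with
  | refl => exact ⟨0, rfl⟩
  | head h' _ ih =>
    obtain ⟨n, hn⟩ := ih
    exact ⟨n + 1, _, h', hn⟩

/-- A multigraph whose (undirected) link relation connects everything has at
least `N - 1` links. -/
lemma card_links_of_connected {V Λ : Type*} [Fintype V] [Nonempty V] [Fintype Λ]
    (s t : Λ → V) (P : Λ → Prop)
    (hconn : ∀ a b : V, Relation.ReflTransGen (linkRel s t P) a b) :
    Fintype.card V - 1 ≤ {ℓ : Λ | P ℓ}.ncard := by
  classical
  obtain ⟨root⟩ := ‹Nonempty V›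
  set R := linkRel s t P with hR
  have hex : ∀ v : V, ∃ n, stepsRel R n v root := fun v =>
    exists_steps_of_reflTransGen (hconn v root)
  set d : V → ℕ := fun v => Nat.find (hex v) with hd
  -- for each non-root vertex, pick a link towards the root
  have key : ∀ v : V, v ≠ root → ∃ (ℓ : Λ) (c : V), P ℓ ∧ d c < d v ∧
      ((s ℓ = v ∧ t ℓ = c) ∨ (s ℓ = c ∧ t ℓ = v)) := by
    intro v hv
    have h0 : d v ≠ 0 := by
      intro h0
      have : stepsRel R 0 v root := h0 ▸ Nat.find_spec (hex v)
      exact hv this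
    obtain ⟨n, hn⟩ : ∃ n, d v = n + 1 := ⟨d v - 1, (Nat.succ_pred_eq_of_ne_zero h0).symm⟩
    have hstep : stepsRel R (n + 1) v root := hn ▸ Nat.find_spec (hex v)
    obtain ⟨c, hvc, hc⟩ := hstep
    have hdc : d c ≤ n := Nat.find_le hc
    obtain ⟨ℓ, hP, hor⟩ := hvc
    exact ⟨ℓ, c, hP, by omega, hor⟩
  choose f c hPf hdf horf using key
  -- the assignment v ↦ f v is injective
  set g : {v : V // v ≠ root} → {ℓ : Λ // P ℓ} :=
    fun v => ⟨f v.1 v.2, hPf v.1 v.2⟩ with hg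
  have hginj : Function.Injective g := by
    rintro ⟨v, hv⟩ ⟨w, hw⟩ hvw
    simp only [hg, Subtype.mk.injEq] at hvw ⊢
    by_contra hne
    have h1 := horf v hv
    have h2 := horf w hw
    rw [hvw] at h1
    have d1 := hdf v hv
    have d2 := hdf w hw
    rcases h1 with ⟨e1, e2⟩ | ⟨e1, e2⟩ <;> rcases h2 with ⟨e3, e4⟩ | ⟨e3, e4⟩
    · exact hne (e1.symm.trans e3)
    · have hcv : c v hv = w := e2.symm.trans e4
      have hd1 : d w < d v := hcv ▸ d1
      have hcw : c w hw = v := e3.symm.trans e1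
      have hd2 : d v < d w := hcw ▸ d2
      omega
    · have hcv : c v hv = w := e1.symm.trans e3
      have hd1 : d w < d v := hcv ▸ d1
      have hcw : c w hw = v := e4.symm.trans e2
      have hd2 : d v < d w := hcw ▸ d2
      omega
    · exact hne (e2.symm.trans e4)
  have hcard := Fintype.card_le_of_injective g hginj
  have h1 : Fintype.card {v : V // v ≠ root} = Fintype.card V - 1 := by
    rw [Fintype.card_subtype_compl, Fintype.card_subtype_eq]
  have h2 : Fintype.card {ℓ : Λ // P ℓ} = {ℓ : Λ | P ℓ}.ncard := by
    rw [← Nat.card_coe_set_eq, Nat.card_eq_fintype_card]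
    exact Fintype.card_congr (Equiv.subtypeEquivRight fun x => Iff.rfl)
  omega

/-- The exchange step: if the tight links do not connect everything, we can
strictly enlarge the set of tight links while keeping feasibility. -/
lemma exchange {V Λ : Type*} [Fintype V] [Fintype Λ] (s t : Λ → V) (τ : Λ → ℝ)
    (η : V → ℝ) (hfeas : ∀ ℓ, 0 ≤ τ ℓ + η (s ℓ) - η (t ℓ))
    (hconn : ∀ a b : V, Relation.ReflTransGen (linkRel s t (fun _ => True)) a b)
    (h : ¬ ∀ a b : V, Relation.ReflTransGen
      (linkRel s t (fun ℓ => τ ℓ + η (s ℓ) - η (t ℓ) = 0)) a b) :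
    ∃ η' : V → ℝ, (∀ ℓ, 0 ≤ τ ℓ + η' (s ℓ) - η' (t ℓ)) ∧
      Finset.univ.filter (fun ℓ => τ ℓ + η (s ℓ) - η (t ℓ) = 0) ⊂
      Finset.univ.filter (fun ℓ => τ ℓ + η' (s ℓ) - η' (t ℓ) = 0) := by
  classical
  set R := linkRel s t (fun ℓ => τ ℓ + η (s ℓ) - η (t ℓ) = 0) with hRdef
  have hRsymm : Symmetric R := linkRel_symm s t _
  push_neg at h
  obtain ⟨a, b, hab⟩ := h
  set A₀ : Set V := {v | Relation.ReflTransGen R a v} with hA₀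
  have haA : a ∈ A₀ := Relation.ReflTransGen.refl
  have hbA : b ∉ A₀ := hab
  have hA₀iff : ∀ v w, R v w → (v ∈ A₀ ↔ w ∈ A₀) :=
    fun v w hvw => ⟨fun hv => hv.tail hvw, fun hw => hw.tail (hRsymm hvw)⟩
  -- find a crossing link
  have hcross_aux : ∀ x : V,
      Relation.ReflTransGen (linkRel s t (fun _ => True)) x b → x ∈ A₀ →
      ∃ ℓ : Λ, (s ℓ ∈ A₀ ∧ t ℓ ∉ A₀) ∨ (s ℓ ∉ A₀ ∧ t ℓ ∈ A₀) := by
    intro x hx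
    induction hx using Relation.ReflTransGen.head_induction_on with
    | refl => exact fun hb => absurd hb hbA
    | @head x y hxy hyb ih =>
      intro hxA
      by_cases hy : y ∈ A₀
      · exact ih hy
      · obtain ⟨ℓ, -, hor | hor⟩ := hxy
        · exact ⟨ℓ, Or.inl ⟨hor.1 ▸ hxA, hor.2 ▸ hy⟩⟩
        · exact ⟨ℓ, Or.inr ⟨hor.1 ▸ hy, hor.2 ▸ hxA⟩⟩
  obtain ⟨ℓ₀, hℓ₀⟩ := hcross_aux a (hconn a b) haA
  -- pick the side `A` so that some link enters `A` from outside
  obtain ⟨A, hAiff, ℓ₁, hℓ₁⟩ : ∃ A : Set V, (∀ v w, R v w → (v ∈ A ↔ w ∈ A)) ∧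
      ∃ ℓ : Λ, s ℓ ∉ A ∧ t ℓ ∈ A := by
    rcases hℓ₀ with h | h
    · exact ⟨A₀ᶜ, fun v w hvw => not_iff_not.mpr (hA₀iff v w hvw),
        ℓ₀, not_not_intro h.1, h.2⟩
    · exact ⟨A₀, hA₀iff, ℓ₀, h.1, h.2⟩
  set In : Finset Λ := Finset.univ.filter (fun ℓ => s ℓ ∉ A ∧ t ℓ ∈ A) with hIn
  have hne : In.Nonempty := ⟨ℓ₁, by simp [hIn, hℓ₁.1, hℓ₁.2]⟩
  set ε : ℝ := In.inf' hne (fun ℓ => τ ℓ + η (s ℓ) - η (t ℓ)) with hε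
  have hInpos : ∀ ℓ ∈ In, 0 < τ ℓ + η (s ℓ) - η (t ℓ) := by
    intro ℓ hℓ
    simp only [hIn, Finset.mem_filter] at hℓ
    rcases lt_or_eq_of_le (hfeas ℓ) with hlt | heq
    · exact hlt
    · exfalso
      have hRst : R (s ℓ) (t ℓ) := ⟨ℓ, heq.symm, Or.inl ⟨rfl, rfl⟩⟩
      exact hℓ.2.1 ((hAiff _ _ hRst).mpr hℓ.2.2)
  have hεpos : 0 < ε := by
    rw [hε, Finset.lt_inf'_iff]
    exact hInpos
  set η' : V → ℝ := fun v => η v + (if v ∈ A then ε else 0) with hη'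
  have hfeas' : ∀ ℓ, 0 ≤ τ ℓ + η' (s ℓ) - η' (t ℓ) := by
    intro ℓ
    by_cases hs : s ℓ ∈ A <;> by_cases ht : t ℓ ∈ A <;>
      simp only [hη', hs, ht, if_pos, if_neg, if_true, if_false]
    · linarith [hfeas ℓ]
    · linarith [hfeas ℓ, hεpos]
    · have hℓIn : ℓ ∈ In := by simp [hIn, hs, ht]
      have := Finset.inf'_le (fun ℓ => τ ℓ + η (s ℓ) - η (t ℓ)) hℓIn
      rw [← hε] at this
      linarith
    · linarith [hfeas ℓ]
  have hsub : Finset.univ.filter (fun ℓ => τ ℓ + η (s ℓ) - η (t ℓ) = 0) ⊆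
      Finset.univ.filter (fun ℓ => τ ℓ + η' (s ℓ) - η' (t ℓ) = 0) := by
    intro ℓ hℓ
    simp only [Finset.mem_filter, Finset.mem_univ, true_and] at hℓ ⊢
    have hRst : R (s ℓ) (t ℓ) := ⟨ℓ, hℓ, Or.inl ⟨rfl, rfl⟩⟩
    have hiff := hAiff _ _ hRst
    by_cases hs : s ℓ ∈ A
    · have ht : t ℓ ∈ A := hiff.mp hs
      simp only [hη', hs, ht, if_true]
      linarith
    · have ht : t ℓ ∉ A := fun ht => hs (hiff.mpr ht)
      simp only [hη', hs, ht, if_false]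
      linarith
  refine ⟨η', hfeas', (Finset.ssubset_iff_of_subset hsub).mpr ?_⟩
  obtain ⟨ℓ₂, hℓ₂In, hℓ₂val⟩ := Finset.exists_mem_eq_inf' hne
    (fun ℓ => τ ℓ + η (s ℓ) - η (t ℓ))
  rw [← hε] at hℓ₂val
  simp only [hIn, Finset.mem_filter, Finset.mem_univ, true_and] at hℓ₂In
  refine ⟨ℓ₂, ?_, ?_⟩
  · simp only [Finset.mem_filter, Finset.mem_univ, true_and]
    simp only [hη', hℓ₂In.1, hℓ₂In.2, if_true, if_false]
    linarith [hℓ₂val]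
  · simp only [Finset.mem_filter, Finset.mem_univ, true_and]
    have := hInpos ℓ₂ (by simp [hIn, hℓ₂In.1, hℓ₂In.2])
    linarith

/-- **Reduction to the essential number of delays.** In a finite connected
network with `N` vertices, `L` links and nonnegative delays, there is a
time-shift vector `η` such that all transformed delays
`τ̃(ℓ) = τ(ℓ) + η(s(ℓ)) − η(t(ℓ))` are nonnegative and at most
`C = L − (N − 1)` links (the cycle space dimension) carry a nonzero
transformed delay. -/
theorem card_nonzero_delays_le_cycle_space_dim
    {V Λ : Type*} [Fintype V] [Nonempty V] [Fintype Λ]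
    (s t : Λ → V) (τ : Λ → ℝ) (hτ : ∀ ℓ, 0 ≤ τ ℓ)
    (hconn : ∀ a b : V, Relation.ReflTransGen (linkRel s t (fun _ => True)) a b) :
    ∃ η : V → ℝ,
      (∀ ℓ, 0 ≤ τ ℓ + η (s ℓ) - η (t ℓ)) ∧
      {ℓ : Λ | τ ℓ + η (s ℓ) - η (t ℓ) ≠ 0}.ncard ≤
        Fintype.card Λ - (Fintype.card V - 1) := by
  classical
  -- find a feasible η whose tight links connect everything
  have main : ∀ k : ℕ, ∀ η : V → ℝ, (∀ ℓ, 0 ≤ τ ℓ + η (s ℓ) - η (t ℓ)) →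
      Fintype.card Λ -
        (Finset.univ.filter (fun ℓ => τ ℓ + η (s ℓ) - η (t ℓ) = 0)).card ≤ k →
      ∃ η' : V → ℝ, (∀ ℓ, 0 ≤ τ ℓ + η' (s ℓ) - η' (t ℓ)) ∧
        ∀ a b : V, Relation.ReflTransGen
          (linkRel s t (fun ℓ => τ ℓ + η' (s ℓ) - η' (t ℓ) = 0)) a b := by
    intro k
    induction k with
    | zero =>
      intro η hfeas hk
      by_cases hc : ∀ a b : V, Relation.ReflTransGen
          (linkRel s t (fun ℓ => τ ℓ + η (s ℓ) - η (t ℓ) = 0)) a b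
      · exact ⟨η, hfeas, hc⟩
      · exfalso
        obtain ⟨η', hfeas', hss⟩ := exchange s t τ η hfeas hconn hc
        have h1 := Finset.card_lt_card hss
        have h2 : (Finset.univ.filter
            (fun ℓ => τ ℓ + η' (s ℓ) - η' (t ℓ) = 0)).card ≤ Fintype.card Λ :=
          Finset.card_filter_le _ _
        omega
    | succ k ih =>
      intro η hfeas hk
      by_cases hc : ∀ a b : V, Relation.ReflTransGen
          (linkRel s t (fun ℓ => τ ℓ + η (s ℓ) - η (t ℓ) = 0)) a b
      · exact ⟨η, hfeas, hc⟩
      · obtain ⟨η', hfeas', hss⟩ := exchange s t τ η hfeas hconn hc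
        have h1 := Finset.card_lt_card hss
        exact ih η' hfeas' (by omega)
  obtain ⟨η, hfeas, hc⟩ := main (Fintype.card Λ) (fun _ => 0)
    (by intro ℓ; simpa using hτ ℓ) (by omega)
  refine ⟨η, hfeas, ?_⟩
  have htight := card_links_of_connected s t
    (fun ℓ => τ ℓ + η (s ℓ) - η (t ℓ) = 0) hc
  have heq : {ℓ : Λ | τ ℓ + η (s ℓ) - η (t ℓ) = 0}.ncard =
      (Finset.univ.filter (fun ℓ => τ ℓ + η (s ℓ) - η (t ℓ) = 0)).card := by
    rw [← Set.ncard_coe_finset]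
    congr 1
    ext ℓ
    simp
  have heq' : {ℓ : Λ | τ ℓ + η (s ℓ) - η (t ℓ) ≠ 0}.ncard =
      (Finset.univ.filter (fun ℓ => ¬ (τ ℓ + η (s ℓ) - η (t ℓ) = 0))).card := by
    rw [← Set.ncard_coe_finset]
    congr 1
    ext ℓ
    simp
  have htight' : Fintype.card V - 1 ≤
      {ℓ : Λ | τ ℓ + η (s ℓ) - η (t ℓ) = 0}.ncard := htight
  have hsum := Finset.card_filter_add_card_filter_not
    (s := (Finset.univ : Finset Λ)) (fun ℓ => τ ℓ + η (s ℓ) - η (t ℓ) = 0)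
  rw [Finset.card_univ] at hsum
  omega
end

section
/- Let a directed network be given by a vertex set V, a link index set Λ with source and target maps s, t : Λ → V, delays τ : Λ → ℝ, and a time-shift vector η : V → ℝ with transformed delays τ̃(ℓ) = τ(ℓ) + η(s(ℓ)) − η(t(ℓ)). Let c = (ℓ₁, …, ℓ_k) be a semicycle with signs Γ₁, …, Γ_k and vertices v₀, …, v_k = v₀. If τ̃(ℓᵢ) = 0 for all i = 1, …, k−1 (i.e. all links of the semicycle except ℓ_k are instantaneous after the transformation), then the transformed delay on the remaining link equals the generalized round-trip time of the semicycle with respect to the original delays: |τ̃(ℓ_k)| = T(c) = |∑_{i=1}^{k} Γᵢ τ(ℓᵢ)|. -/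
/-- A semicycle of a directed network with source/target maps `s, t : Λ → V`:
a closed undirected path given by pairwise distinct links `links 0, …, links (k-1)`,
signs `Γᵢ ∈ {+1, −1}` and vertices `v₀, …, v_k` with `v_k = v₀`, such that link
`i` goes from `v_i` to `v_{i+1}` if `Γᵢ = +1` and from `v_{i+1}` to `v_i` if
`Γᵢ = −1`. -/
structure Semicycle {V Λ : Type*} (s t : Λ → V) where
  k : ℕ
  kpos : 0 < k
  links : Fin k → Λ
  links_inj : Function.Injective links
  sign : Fin k → ℝ
  sign_pm : ∀ i, sign i = 1 ∨ sign i = -1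
  vert : Fin (k + 1) → V
  closed : vert (Fin.last k) = vert 0
  compat : ∀ i : Fin k,
    (sign i = 1 → s (links i) = vert i.castSucc ∧ t (links i) = vert i.succ) ∧
    (sign i = -1 → s (links i) = vert i.succ ∧ t (links i) = vert i.castSucc)

lemma telescope_fin : ∀ (n : ℕ) (g : Fin (n + 1) → ℝ),
    ∑ i : Fin n, (g i.castSucc - g i.succ) = g 0 - g (Fin.last n) := by
  intro n
  induction n with
  | zero => intro g; simp [Fin.last]
  | succ n ih =>
    intro g
    rw [Fin.sum_univ_castSucc]
    have := ih (fun i => g i.castSucc)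
    simp only [Fin.succ_castSucc] at this ⊢
    rw [show ∑ i : Fin n, (g i.castSucc.castSucc - g i.succ.castSucc)
        = g (0 : Fin (n+1)).castSucc - g (Fin.last n).castSucc from this]
    have h2 : (Fin.last n).succ = Fin.last (n + 1) := rfl
    have h3 : ((0 : Fin (n+1)).castSucc : Fin (n+2)) = 0 := rfl
    rw [h2, h3]; ring

/-- **The delay on the last link of an otherwise instantaneous semicycle is the
generalized round-trip time.** If a time shift `η` makes all links of a
semicycle except the last one instantaneous, then the absolute value of the
transformed delay on the remaining link equals
`T(c) = |∑ᵢ Γᵢ τ(ℓᵢ)|`, the round-trip time of the original delays. -/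
theorem remaining_delay_eq_roundtrip
    {V Λ : Type*} (s t : Λ → V) (τ : Λ → ℝ) (η : V → ℝ) (c : Semicycle s t)
    (hzero : ∀ i : Fin c.k, (i : ℕ) + 1 < c.k →
      τ (c.links i) + η (s (c.links i)) - η (t (c.links i)) = 0) :
    |τ (c.links ⟨c.k - 1, by have := c.kpos; omega⟩)
        + η (s (c.links ⟨c.k - 1, by have := c.kpos; omega⟩))
        - η (t (c.links ⟨c.k - 1, by have := c.kpos; omega⟩))|
      = |∑ i : Fin c.k, c.sign i * τ (c.links i)| := by
  set k := c.k with hk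
  have kpos := c.kpos
  set τt : Fin k → ℝ := fun i =>
    τ (c.links i) + η (s (c.links i)) - η (t (c.links i)) with hτt
  -- pointwise identity: sign i * τ̃ i = sign i * τ i + η(v_i) - η(v_{i+1})
  have hpt : ∀ i : Fin k, c.sign i * τt i
      = c.sign i * τ (c.links i) + (η (c.vert i.castSucc) - η (c.vert i.succ)) := by
    intro i
    rcases c.sign_pm i with hs | hs
    · obtain ⟨h1, h2⟩ := (c.compat i).1 hs
      simp only [hτt, hs, h1, h2]; ring
    · obtain ⟨h1, h2⟩ := (c.compat i).2 hs
      simp only [hτt, hs, h1, h2]; ring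
  -- telescoping sum
  have htel : ∑ i : Fin k, (η (c.vert i.castSucc) - η (c.vert i.succ)) = 0 := by
    rw [telescope_fin k (fun v => η (c.vert v)), c.closed, sub_self]
  have hsum : ∑ i : Fin k, c.sign i * τt i = ∑ i : Fin k, c.sign i * τ (c.links i) := by
    calc ∑ i : Fin k, c.sign i * τt i
        = ∑ i : Fin k, (c.sign i * τ (c.links i)
            + (η (c.vert i.castSucc) - η (c.vert i.succ))) := by
          exact Finset.sum_congr rfl fun i _ => hpt i
      _ = ∑ i : Fin k, c.sign i * τ (c.links i)
            + ∑ i : Fin k, (η (c.vert i.castSucc) - η (c.vert i.succ)) :=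
          Finset.sum_add_distrib
      _ = _ := by rw [htel]; ring
  -- all terms but last vanish
  set j : Fin k := ⟨k - 1, by omega⟩ with hj
  have hsingle : ∑ i : Fin k, c.sign i * τt i = c.sign j * τt j := by
    apply Finset.sum_eq_single_of_mem j (Finset.mem_univ j)
    intro i _ hij
    have : (i : ℕ) + 1 < k := by
      have hi := i.isLt
      have : (i : ℕ) ≠ k - 1 := fun h => hij (by ext; simp [hj, h])
      omega
    have := hzero i this
    simp only [hτt] at *
    rw [this, mul_zero]
  have key : c.sign j * τt j = ∑ i : Fin k, c.sign i * τ (c.links i) := by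
    rw [← hsingle, hsum]
  have : |τt j| = |∑ i : Fin k, c.sign i * τ (c.links i)| := by
    rw [← key, abs_mul]
    rcases c.sign_pm j with hs | hs <;> rw [hs] <;> simp
  simpa [hτt, hj] using this
end

section
/- Let a directed network be given by a finite vertex set V with |V| = N, a finite link index set Λ with |Λ| = L, source and target maps s, t : Λ → V, and delays τ : Λ → ℝ. Suppose that for some time-shift vector η : V → ℝ the number of links with nonzero transformed delay τ̃(ℓ) = τ(ℓ) + η(s(ℓ)) − η(t(ℓ)) is strictly less than C = L − (N − 1). Then there exists a semicycle c of the network all of whose links satisfy τ̃(ℓ) = 0, and consequently the generalized round-trip time of c with respect to the original delays vanishes: T(c) = |∑ᵢ Γᵢ τ(ℓᵢ)| = 0. In other words, a reduction below the essential number C of delays is possible only if some semicycle has zero generalized round-trip time. -/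
/-!
Links whose transformed delay vanishes number at least `N`, and `N` links on `N` vertices always
contain a semicycle: a loop or a pair of parallel links is one, and otherwise the links form a
simple graph with at least `N` edges, which is not a forest. Along a semicycle the shift terms
`η (s ℓ) - η (t ℓ)` telescope, so its round-trip time is the same for `τ` and for the transformed
delays, which vanish on it.
-/

open Finset

lemma SimpleGraph.IsAcyclic.card_edgeSet_lt {V : Type*} [Finite V] [Nonempty V]
    {G : SimpleGraph V} (hG : G.IsAcyclic) : Nat.card G.edgeSet < Nat.card V := by
  obtain ⟨T, hGT, hT⟩ := (⊤ : SimpleGraph V).exists_maximal_isAcyclic_of_le_isAcyclic le_top hG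
  have hTree : T.IsTree := isTree_iff_maximal_isAcyclic.2
    ⟨inferInstance, hT.prop.2, fun H hH hTH => hT.2 ⟨le_top, hH⟩ hTH⟩
  have hcard := (isTree_iff_connected_and_card.1 hTree).2
  have hle : Nat.card G.edgeSet ≤ Nat.card T.edgeSet := by
    simpa only [Nat.card_coe_set_eq] using Set.ncard_le_ncard (edgeSet_mono hGT)
  omega

namespace Semicycle

variable {V Λ : Type*} {s t : Λ → V}

lemma sign_mul_sub (c : Semicycle s t) (f : V → ℝ) (i : Fin c.k) :
    c.sign i * (f (s (c.links i)) - f (t (c.links i))) =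
      f (c.vert i.castSucc) - f (c.vert i.succ) := by
  rcases c.sign_pm i with h | h
  · obtain ⟨hs, ht⟩ := (c.compat i).1 h
    rw [h, hs, ht, one_mul]
  · obtain ⟨hs, ht⟩ := (c.compat i).2 h
    rw [h, hs, ht]
    ring

lemma sum_sign_mul_sub_eq_zero (c : Semicycle s t) (f : V → ℝ) :
    ∑ i, c.sign i * (f (s (c.links i)) - f (t (c.links i))) = 0 := by
  have hlast := Fin.sum_univ_castSucc fun i => f (c.vert i)
  have hzero := Fin.sum_univ_succ fun i => f (c.vert i)
  rw [c.closed] at hlast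
  calc ∑ i, c.sign i * (f (s (c.links i)) - f (t (c.links i)))
      = ∑ i : Fin c.k, f (c.vert i.castSucc) - ∑ i : Fin c.k, f (c.vert i.succ) := by
        simp only [sign_mul_sub, sum_sub_distrib]
    _ = 0 := by linarith

lemma sum_sign_mul_shift (c : Semicycle s t) (τ : Λ → ℝ) (η : V → ℝ) :
    ∑ i, c.sign i * (τ (c.links i) + η (s (c.links i)) - η (t (c.links i))) =
      ∑ i, c.sign i * τ (c.links i) := by
  simp only [add_sub_assoc, mul_add, sum_add_distrib, sum_sign_mul_sub_eq_zero, add_zero]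

lemma sign_compat_of_sym2_eq [DecidableEq V] {ℓ : Λ} {a b : V} (h : s(s ℓ, t ℓ) = s(a, b)) :
    ((if s ℓ = a then (1 : ℝ) else -1) = 1 → s ℓ = a ∧ t ℓ = b) ∧
      ((if s ℓ = a then (1 : ℝ) else -1) = -1 → s ℓ = b ∧ t ℓ = a) := by
  rw [Sym2.eq_iff] at h
  split_ifs with ha <;> norm_num <;> grind

def ofLoop {ℓ : Λ} (h : s ℓ = t ℓ) : Semicycle s t where
  k := 1
  kpos := one_pos
  links _ := ℓ
  links_inj _ _ _ := Subsingleton.elim _ _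
  sign _ := 1
  sign_pm _ := Or.inl rfl
  vert _ := s ℓ
  closed := rfl
  compat _ := ⟨fun _ => ⟨rfl, h.symm⟩, fun h1 => by norm_num at h1⟩

def ofParallel [DecidableEq V] {ℓ ℓ' : Λ} (hne : ℓ ≠ ℓ') (h : s(s ℓ, t ℓ) = s(s ℓ', t ℓ')) :
    Semicycle s t where
  k := 2
  kpos := two_pos
  links := ![ℓ, ℓ']
  links_inj := by
    intro i j hij
    fin_cases i <;> fin_cases j <;> simp_all [eq_comm]
  sign := ![1, if s ℓ' = t ℓ then 1 else -1]
  sign_pm := Fin.forall_fin_two.2 ⟨Or.inl rfl, by dsimp; split_ifs <;> simp⟩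
  vert := ![s ℓ, t ℓ, s ℓ]
  closed := rfl
  compat := Fin.forall_fin_two.2
    ⟨⟨fun _ => ⟨rfl, rfl⟩, fun h1 => by norm_num at h1⟩,
      sign_compat_of_sym2_eq (h.symm.trans Sym2.eq_swap)⟩

def ofCircuit [DecidableEq V] {G : SimpleGraph V} {u : V} (p : G.Walk u u) (hp : p.IsCircuit)
    (link : Sym2 V → Λ) (hlink : ∀ e ∈ p.edges, s(s (link e), t (link e)) = e) :
    Semicycle s t where
  k := p.length
  kpos := by have := hp.three_le_length; omega
  links i := link (p.edges[(i : ℕ)]'(by simp))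
  links_inj i j hij := by
    have := congrArg (fun ℓ => s(s ℓ, t ℓ)) hij
    dsimp only at this
    rw [hlink _ (List.getElem_mem _), hlink _ (List.getElem_mem _)] at this
    exact Fin.ext ((hp.edges_nodup.getElem_inj_iff).1 this)
  sign i := if s (link (p.edges[(i : ℕ)]'(by simp))) = p.getVert i then 1 else -1
  sign_pm i := by split_ifs <;> simp
  vert i := p.getVert i
  closed := by simp
  compat i :=
    sign_compat_of_sym2_eq ((hlink _ (List.getElem_mem _)).trans (p.getElem_edges _))

end Semicycle

theorem exists_semicycle_of_card_le {V Λ : Type*} [Finite V] [Nonempty V] (s t : Λ → V)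
    (E : Finset Λ) (hE : Nat.card V ≤ #E) : ∃ c : Semicycle s t, ∀ i, c.links i ∈ E := by
  classical
  by_cases hloop : ∃ ℓ ∈ E, s ℓ = t ℓ
  · obtain ⟨ℓ, hℓ, h⟩ := hloop
    exact ⟨.ofLoop h, fun _ => hℓ⟩
  by_cases hparallel : ∃ ℓ ∈ E, ∃ ℓ' ∈ E, ℓ ≠ ℓ' ∧ s(s ℓ, t ℓ) = s(s ℓ', t ℓ')
  · obtain ⟨ℓ, hℓ, ℓ', hℓ', hne, h⟩ := hparallel
    exact ⟨.ofParallel hne h, Fin.forall_fin_two.2 ⟨hℓ, hℓ'⟩⟩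
  push Not at hloop hparallel
  set edge : Λ → Sym2 V := fun ℓ => s(s ℓ, t ℓ)
  have hinj : Set.InjOn edge E := fun ℓ hℓ ℓ' hℓ' h =>
    by_contra fun hne => hparallel ℓ hℓ ℓ' hℓ' hne h
  let G := SimpleGraph.fromEdgeSet (edge '' E)
  have hG : G.edgeSet = edge '' E := by
    rw [SimpleGraph.edgeSet_fromEdgeSet, sdiff_eq_left, Set.disjoint_left]
    rintro _ ⟨ℓ, hℓ, rfl⟩
    exact Sym2.mk_isDiag_iff.not.2 (hloop ℓ hℓ)
  have hcard : Nat.card G.edgeSet = #E := by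
    rw [hG, Nat.card_coe_set_eq, hinj.ncard_image, Set.ncard_coe_finset]
  have hcyclic : ¬ G.IsAcyclic := fun h => h.card_edgeSet_lt.not_ge (hcard ▸ hE)
  obtain ⟨u, p, hp⟩ : ∃ u, ∃ p : G.Walk u u, p.IsCycle := by
    simpa [SimpleGraph.IsAcyclic] using hcyclic
  have hmem : ∀ e ∈ p.edges, e ∈ edge '' E := fun e he => hG ▸ p.edges_subset_edgeSet he
  have : Nonempty Λ := ⟨(Finset.card_pos.1 (Nat.card_pos.trans_le hE)).choose⟩
  exact ⟨.ofCircuit p hp.isCircuit (Function.invFunOn edge E)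
      fun e he => Function.invFunOn_eq (hmem e he),
    fun i => Function.invFunOn_mem (hmem _ (List.getElem_mem _))⟩

/-- **Reduction below the essential number of delays forces a semicycle of zero
round-trip time.** If for some time shift `η` the number of links with nonzero
transformed delay is strictly less than the cycle space dimension
`C = L − (N − 1)`, then there is a semicycle all of whose links are
instantaneous after the transformation, and its generalized round-trip time
with respect to the original delays vanishes. -/
theorem reduction_below_cycle_dim_gives_zero_roundtrip_semicycle
    {V Λ : Type*} [Fintype V] [Fintype Λ]
    (s t : Λ → V) (τ : Λ → ℝ) (η : V → ℝ)
    (hfew : {ℓ : Λ | τ ℓ + η (s ℓ) - η (t ℓ) ≠ 0}.ncard <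
      Fintype.card Λ - (Fintype.card V - 1)) :
    ∃ c : Semicycle s t,
      (∀ i : Fin c.k, τ (c.links i) + η (s (c.links i)) - η (t (c.links i)) = 0) ∧
      ∑ i : Fin c.k, c.sign i * τ (c.links i) = 0 := by
  classical
  set E := univ.filter fun ℓ => τ ℓ + η (s ℓ) - η (t ℓ) = 0
  have hsplit : #E + {ℓ : Λ | τ ℓ + η (s ℓ) - η (t ℓ) ≠ 0}.ncard = Fintype.card Λ := by
    rw [Set.ncard_eq_toFinset_card', Set.toFinset_ofPred, card_filter_add_card_filter_not,
      card_univ]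
  have : Nonempty V := by
    by_contra hV
    have : IsEmpty Λ := ⟨fun ℓ => hV ⟨s ℓ⟩⟩
    simp at hfew
  obtain ⟨c, hc⟩ := exists_semicycle_of_card_le s t E (by rw [Nat.card_eq_fintype_card]; omega)
  have hzero (i : Fin c.k) : τ (c.links i) + η (s (c.links i)) - η (t (c.links i)) = 0 :=
    (mem_filter.1 (hc i)).2
  refine ⟨c, hzero, ?_⟩
  rw [← c.sum_sign_mul_shift τ η]
  simp [hzero]
end

section
/- Fix a directed network topology: a finite vertex set V with |V| = N, a finite link index set Λ with |Λ| = L, and source and target maps s, t : Λ → V. Then the set of delay vectors τ ∈ ℝ^Λ for which there exists a time-shift vector η : V → ℝ making the number of links with nonzero transformed delay τ̃(ℓ) = τ(ℓ) + η(s(ℓ)) − η(t(ℓ)) strictly less than C = L − (N − 1) is a Lebesgue null set in ℝ^Λ (it is contained in the finite union, over all semicycles of the network, of the hyperplanes {τ : ∑ᵢ Γᵢ τ(ℓᵢ) = 0}). Hence generically the number of delays cannot be reduced below the cycle space dimension C. -/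
open MeasureTheory

/-- **Genericity: the number of delays cannot be reduced below the cycle space
dimension, except on a null set of delay vectors.** For a fixed finite network
topology, the set of delay vectors `τ : Λ → ℝ` admitting a time shift `η` that
leaves strictly fewer than `C = L − (N − 1)` links with nonzero transformed
delay `τ̃(ℓ) = τ(ℓ) + η(s(ℓ)) − η(t(ℓ))` is a Lebesgue null set in `ℝ^Λ`. -/
theorem reduction_below_cycle_dim_is_null
    {V Λ : Type*} [Fintype V] [Fintype Λ] (s t : Λ → V) :
    volume {τ : Λ → ℝ | ∃ η : V → ℝ,
      {ℓ : Λ | τ ℓ + η (s ℓ) - η (t ℓ) ≠ 0}.ncard <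
        Fintype.card Λ - (Fintype.card V - 1)} = 0 := by
  classical
  cases isEmpty_or_nonempty V with
  | inl hV =>
    have hΛ : IsEmpty Λ := ⟨fun ℓ => hV.false (s ℓ)⟩
    have : {τ : Λ → ℝ | ∃ η : V → ℝ,
      {ℓ : Λ | τ ℓ + η (s ℓ) - η (t ℓ) ≠ 0}.ncard <
        Fintype.card Λ - (Fintype.card V - 1)} = ∅ := by
      ext τ
      simp [Fintype.card_eq_zero]
    rw [this]; simp
  | inr hV =>
    set N := Fintype.card V with hN
    -- for each Z : Finset Λ, the submodule of τ whose restriction to Z is a coboundary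
    let π : (Z : Finset Λ) → ((Λ → ℝ) →ₗ[ℝ] (Z → ℝ)) :=
      fun Z => LinearMap.funLeft ℝ ℝ (fun ℓ : Z => (ℓ : Λ))
    let f : (Z : Finset Λ) → ((V → ℝ) →ₗ[ℝ] (Z → ℝ)) :=
      fun Z => LinearMap.funLeft ℝ ℝ (fun ℓ : Z => t ℓ)
        - LinearMap.funLeft ℝ ℝ (fun ℓ : Z => s ℓ)
    let W : Finset Λ → Submodule ℝ (Λ → ℝ) :=
      fun Z => Submodule.comap (π Z) (LinearMap.range (f Z))
    have hsub : {τ : Λ → ℝ | ∃ η : V → ℝ,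
        {ℓ : Λ | τ ℓ + η (s ℓ) - η (t ℓ) ≠ 0}.ncard <
          Fintype.card Λ - (Fintype.card V - 1)} ⊆
        ⋃ Z ∈ {Z : Finset Λ | N ≤ Z.card}, (W Z : Set (Λ → ℝ)) := by
      rintro τ ⟨η, hη⟩
      set Z : Finset Λ := Finset.univ.filter
        (fun ℓ => τ ℓ + η (s ℓ) - η (t ℓ) = 0) with hZ
      have hcard : Z.card + (Finset.univ.filter
          (fun ℓ => ¬ (τ ℓ + η (s ℓ) - η (t ℓ) = 0))).card = Fintype.card Λ :=
        Finset.card_filter_add_card_filter_not _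
      have hncard : {ℓ : Λ | τ ℓ + η (s ℓ) - η (t ℓ) ≠ 0}.ncard =
          (Finset.univ.filter
            (fun ℓ => ¬ (τ ℓ + η (s ℓ) - η (t ℓ) = 0))).card := by
        rw [Set.ncard_eq_toFinset_card']
        congr 1
        ext ℓ
        simp
      have hZcard : N ≤ Z.card := by
        rw [hncard] at hη
        omega
      refine Set.mem_biUnion hZcard ?_
      refine ⟨η, ?_⟩
      funext ℓ
      have hℓ : τ (ℓ : Λ) + η (s ℓ) - η (t ℓ) = 0 :=
        (Finset.mem_filter.mp ℓ.2).2
      simp only [f, π, LinearMap.sub_apply, Pi.sub_apply, LinearMap.funLeft_apply]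
      linarith
    refine measure_mono_null hsub ?_
    rw [measure_biUnion_null_iff (Set.to_countable _)]
    rintro Z (hZ : N ≤ Z.card)
    refine Measure.addHaar_submodule volume (W Z) ?_
    -- the submodule is proper
    intro htop
    -- then range (f Z) = ⊤ since π Z is surjective
    have hπ : Function.Surjective (π Z) :=
      LinearMap.funLeft_surjective_of_injective ℝ ℝ _ Subtype.val_injective
    have hrange : LinearMap.range (f Z) = ⊤ := by
      rw [eq_top_iff]
      rintro x -
      obtain ⟨τ, rfl⟩ := hπ x
      have : τ ∈ W Z := htop ▸ Submodule.mem_top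
      exact this
    -- but the rank of f Z is at most N - 1 < Z.card
    have hker : (fun _ : V => (1 : ℝ)) ∈ LinearMap.ker (f Z) := by
      simp only [f, LinearMap.mem_ker, LinearMap.sub_apply]
      funext ℓ
      simp
    have hne : (fun _ : V => (1 : ℝ)) ≠ 0 := by
      intro h
      have := congrFun h hV.some
      simp at this
    have hkerpos : 0 < Module.finrank ℝ (LinearMap.ker (f Z)) := by
      rw [Module.finrank_pos_iff]
      exact ⟨⟨⟨_, hker⟩, 0, by simpa using hne⟩⟩
    have hrn := LinearMap.finrank_range_add_finrank_ker (f Z)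
    have h1 : Module.finrank ℝ (V → ℝ) = N := Module.finrank_fintype_fun_eq_card ℝ
    have h2 : Module.finrank ℝ ({ℓ : Λ // ℓ ∈ Z} → ℝ) = Z.card := by
      rw [Module.finrank_fintype_fun_eq_card ℝ, Fintype.card_coe]
    have h3 : Module.finrank ℝ (LinearMap.range (f Z)) = Z.card := by
      rw [hrange, finrank_top, h2]
    omega
end
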